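/- arXiv:1801.05582 — 3 statements merged into one kernel-verified Lean document; each statement's English description precedes it below -/
import Mathlib

section
/- Let H be a bounded self-adjoint operator on a Hilbert space ℋ, and let ω₀ not be an eigenvalue of H. Let K be a compact operator and B₁ a bounded self-adjoint operator such that P_δ B₁ P_δ ≥ α P_δ² + P_δ K P_δ, where P_δ is the spectral projection of H onto [ω₀−δ, ω₀+δ]. Then there exists δ > 0 such that P_δ B₁ P_δ ≥ (α/2) P_δ². -/
open scoped InnerProductSpace
open Filter Topology Metric

/-!
Strong convergence to zero of a uniformly bounded family is uniform on compact sets (an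
`ε/2`-net argument), so composing with a compact operator `K` turns it into norm convergence:
`‖P_δ K‖ → 0`. For a self-adjoint idempotent `P`, `⟪Pφ, K Pφ⟫ = ⟪Pφ, P K Pφ⟫`, hence
`|Re ⟪Pφ, K Pφ⟫| ≤ ‖P K‖ ‖Pφ‖²`, and once `‖P_δ K‖ ≤ α/2` the compact error term absorbs at
most half of `α ‖P_δ φ‖²`.
-/

section UniformOnCompact

variable {ι 𝕜 E F : Type*} [NontriviallyNormedField 𝕜]
  [SeminormedAddCommGroup E] [NormedSpace 𝕜 E] [SeminormedAddCommGroup F] [NormedSpace 𝕜 F]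
  {l : Filter ι} {T : ι → E →L[𝕜] F}

theorem eventually_forall_norm_apply_lt_of_tendsto_pointwise {S : Set E} (hS : IsCompact S)
    {C : ℝ} (hbdd : ∀ᶠ i in l, ‖T i‖ ≤ C) (hT : ∀ x, Tendsto (fun i => T i x) l (𝓝 0))
    {ε : ℝ} (hε : 0 < ε) : ∀ᶠ i in l, ∀ x ∈ S, ‖T i x‖ < ε := by
  obtain ⟨r, hr, hCr⟩ := exists_pos_mul_lt (half_pos hε) C
  obtain ⟨t, ht, hSt⟩ := totallyBounded_iff.1 hS.totallyBounded r hr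
  have hnet : ∀ᶠ i in l, ∀ y ∈ t, ‖T i y‖ < ε / 2 :=
    (eventually_all_finite ht).2 fun y _ =>
      (hT y).norm.eventually_lt_const (by simpa using half_pos hε)
  filter_upwards [hbdd, hnet] with i hi hnet x hx
  obtain ⟨y, hy, hxy⟩ := Set.mem_iUnion₂.1 (hSt hx)
  have hxy : ‖x - y‖ ≤ r := (mem_ball_iff_norm.1 hxy).le
  calc ‖T i x‖ = ‖T i (x - y) + T i y‖ := by rw [← map_add, sub_add_cancel]
    _ ≤ ‖T i‖ * ‖x - y‖ + ‖T i y‖ := norm_add_le_of_le ((T i).le_opNorm _) le_rfl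
    _ < C * r + ε / 2 :=
      add_lt_add_of_le_of_lt (mul_le_mul hi hxy (norm_nonneg _) ((norm_nonneg _).trans hi))
        (hnet y hy)
    _ < ε := by linarith

end UniformOnCompact

theorem IsCompactOperator.tendsto_comp_of_tendsto_pointwise {ι 𝕜 E F G : Type*}
    [NontriviallyNormedField 𝕜] [NormedAlgebra ℝ 𝕜]
    [SeminormedAddCommGroup E] [NormedSpace 𝕜 E] [SeminormedAddCommGroup F] [NormedSpace 𝕜 F]
    [SeminormedAddCommGroup G] [NormedSpace 𝕜 G]
    {l : Filter ι} {T : ι → F →L[𝕜] G} {K : E →L[𝕜] F} (hK : IsCompactOperator K)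
    {C : ℝ} (hbdd : ∀ᶠ i in l, ‖T i‖ ≤ C) (hT : ∀ x, Tendsto (fun i => T i x) l (𝓝 0)) :
    Tendsto (fun i => T i ∘L K) l (𝓝 0) := by
  obtain ⟨S, hS, hKS⟩ := hK.image_closedBall_subset_compact 1
  refine Metric.tendsto_nhds.2 fun ε hε => ?_
  filter_upwards [eventually_forall_norm_apply_lt_of_tendsto_pointwise hS hbdd hT (half_pos hε)]
    with i hi
  rw [dist_zero_right]
  refine lt_of_le_of_lt ?_ (half_lt_self hε)
  refine (T i ∘L K).opNorm_le_of_unit_norm (half_pos hε).le fun x hx => (hi _ ?_).le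
  exact hKS ⟨x, by simp [hx], rfl⟩

section StarProjection

variable {𝕜 E : Type*} [RCLike 𝕜] [NormedAddCommGroup E] [InnerProductSpace 𝕜 E]
  [CompleteSpace E] {P : E →L[𝕜] E}

theorem IsStarProjection.inner_apply_eq_inner_comp (hP : IsStarProjection P) (K : E →L[𝕜] E)
    (x : E) : ⟪P x, K (P x)⟫_𝕜 = ⟪P x, (P ∘L K) (P x)⟫_𝕜 := by
  have h := hP.isSelfAdjoint.isSymmetric (P x) (K (P x))
  rwa [ContinuousLinearMap.coe_coe, show P (P x) = P x from
    DFunLike.congr_fun hP.isIdempotentElem.eq x] at h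

theorem IsStarProjection.neg_le_re_inner_apply (hP : IsStarProjection P) (K : E →L[𝕜] E)
    (x : E) : -(‖P ∘L K‖ * ‖P x‖ ^ 2) ≤ RCLike.re ⟪P x, K (P x)⟫_𝕜 := by
  rw [hP.inner_apply_eq_inner_comp]
  refine neg_le_of_abs_le ((RCLike.abs_re_le_norm _).trans ?_)
  calc ‖⟪P x, (P ∘L K) (P x)⟫_𝕜‖ ≤ ‖P x‖ * (‖P ∘L K‖ * ‖P x‖) :=
        (norm_inner_le_norm _ _).trans (by gcongr; exact (P ∘L K).le_opNorm _)
    _ = ‖P ∘L K‖ * ‖P x‖ ^ 2 := by ring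

end StarProjection

theorem spectral_projection_mourre_absorption_general
    {E : Type*} [NormedAddCommGroup E] [InnerProductSpace ℂ E] [CompleteSpace E]
    (B₁ K : E →L[ℂ] E)
    (hK : IsCompactOperator K)
    (δ₀ α : ℝ) (hδ₀ : 0 < δ₀) (hα : 0 < α)
    (P : ℝ → (E →L[ℂ] E))
    (hPsa : ∀ δ ∈ Set.Ioc 0 δ₀, IsSelfAdjoint (P δ))
    (hPproj : ∀ δ ∈ Set.Ioc 0 δ₀, (P δ) ∘L (P δ) = P δ)
    -- strong convergence `P δ → 0` as `δ → 0⁺`, valid since `ω₀` is not an eigenvalue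
    (hPto0 : ∀ φ : E,
      Filter.Tendsto (fun δ => P δ φ) (nhdsWithin 0 (Set.Ioi 0)) (nhds 0))
    (hineq : ∀ δ ∈ Set.Ioc 0 δ₀, ∀ φ : E,
      α * ‖P δ φ‖ ^ 2 + (inner ℂ (P δ φ) (K (P δ φ)) : ℂ).re ≤
        (inner ℂ (P δ φ) (B₁ (P δ φ)) : ℂ).re) :
    ∃ δ ∈ Set.Ioc 0 δ₀, ∀ φ : E,
      (α / 2) * ‖P δ φ‖ ^ 2 ≤ (inner ℂ (P δ φ) (B₁ (P δ φ)) : ℂ).re := by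
  have hIoc : ∀ᶠ δ in 𝓝[>] 0, δ ∈ Set.Ioc 0 δ₀ := Ioc_mem_nhdsGT hδ₀
  have hP : ∀ δ ∈ Set.Ioc 0 δ₀, IsStarProjection (P δ) := fun δ hδ => ⟨hPproj δ hδ, hPsa δ hδ⟩
  have hPK : Tendsto (fun δ => P δ ∘L K) (𝓝[>] 0) (𝓝 0) :=
    hK.tendsto_comp_of_tendsto_pointwise
      (hIoc.mono fun δ hδ => (hP δ hδ).norm_le) hPto0
  obtain ⟨δ, hδ, hsmall⟩ :=
    (hIoc.and (hPK.norm.eventually_le_const (u := α / 2) (by simpa using half_pos hα))).exists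
  refine ⟨δ, hδ, fun φ => ?_⟩
  have hKφ : -(‖P δ ∘L K‖ * ‖P δ φ‖ ^ 2) ≤ (⟪P δ φ, K (P δ φ)⟫_ℂ).re :=
    (hP δ hδ).neg_le_re_inner_apply K φ
  have hPKφ := mul_le_mul_of_nonneg_right hsmall (sq_nonneg ‖P δ φ‖)
  linarith [hineq δ hδ φ]

/-- If `ω₀` is not an eigenvalue of `H`, the spectral projections
`P δ` of `H` onto `[ω₀−δ, ω₀+δ]` tend strongly to `0` as `δ → 0⁺` (this is taken as
the characterizing hypothesis here); if `K` is compact and the quadratic-form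
inequality `P_δ B₁ P_δ ≥ α P_δ² + P_δ K P_δ` holds for all small `δ`, then for
`δ` small enough `P_δ B₁ P_δ ≥ (α/2) P_δ²`. -/
theorem spectral_projection_mourre_absorption
    {E : Type*} [NormedAddCommGroup E] [InnerProductSpace ℂ E] [CompleteSpace E]
    (H B₁ K : E →L[ℂ] E) (hH : IsSelfAdjoint H) (hB₁ : IsSelfAdjoint B₁)
    (hK : IsCompactOperator K)
    (δ₀ α : ℝ) (hδ₀ : 0 < δ₀) (hα : 0 < α)
    (P : ℝ → (E →L[ℂ] E))
    (hPsa : ∀ δ ∈ Set.Ioc 0 δ₀, IsSelfAdjoint (P δ))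
    (hPproj : ∀ δ ∈ Set.Ioc 0 δ₀, (P δ) ∘L (P δ) = P δ)
    (hPcomm : ∀ δ ∈ Set.Ioc 0 δ₀, (P δ) ∘L H = H ∘L (P δ))
    -- strong convergence `P δ → 0` as `δ → 0⁺`, valid since `ω₀` is not an eigenvalue
    (hPto0 : ∀ φ : E,
      Filter.Tendsto (fun δ => P δ φ) (nhdsWithin 0 (Set.Ioi 0)) (nhds 0))
    (hineq : ∀ δ ∈ Set.Ioc 0 δ₀, ∀ φ : E,
      α * ‖P δ φ‖ ^ 2 + (inner ℂ (P δ φ) (K (P δ φ)) : ℂ).re ≤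
        (inner ℂ (P δ φ) (B₁ (P δ φ)) : ℂ).re) :
    ∃ δ ∈ Set.Ioc 0 δ₀, ∀ φ : E,
      (α / 2) * ‖P δ φ‖ ^ 2 ≤ (inner ℂ (P δ φ) (B₁ (P δ φ)) : ℂ).re :=
  spectral_projection_mourre_absorption_general B₁ K hK δ₀ α hδ₀ hα P hPsa hPproj hPto0 hineq
end

section
/- Let F : (0, ε₀] → B be a C¹ function with values in a Banach space B satisfying ‖F'(ε)‖ ≤ C ε^{s−3/2}(ε + ‖F(ε)‖)^{1/2} for some 1/2 < s < 1. Then ‖F(ε)‖ is uniformly bounded on (0, ε₀] and F(ε) converges in B as ε → 0⁺. -/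
/-!
Write `p = s - 1/2`. For `0 < ε ≤ ε₀`, let `m ∈ [ε, ε₀]` maximise `x = t + ‖F t‖`. Integrating the
inequality from `m` to `ε₀` gives `x ≤ ε₀ + ‖F ε₀‖ + (C/p) ε₀^p √x`, a quadratic inequality in `√x`
whose solution bound does not depend on `ε`. Once `t + ‖F t‖ ≤ M`, the derivative is dominated by
`K t^(p-1)` with `K = C √M`, so `‖F b - F a‖ ≤ (K/p) |b^p - a^p|` and `F` is Cauchy at `0⁺`.
-/

open Filter Set Topology

section

variable {E : Type*} [NormedAddCommGroup E] [NormedSpace ℝ E]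

theorem norm_sub_le_of_norm_deriv_le_rpow {f f' : ℝ → E} {a b K p : ℝ} (ha : 0 < a)
    (hab : a ≤ b) (hp : p ≠ 0) (hf : ∀ t ∈ Icc a b, HasDerivAt f (f' t) t)
    (bound : ∀ t ∈ Ico a b, ‖f' t‖ ≤ K * t ^ (p - 1)) :
    ‖f b - f a‖ ≤ K / p * (b ^ p - a ^ p) := by
  have hg : ∀ t ∈ Icc a b,
      HasDerivAt (fun u => K / p * (u ^ p - a ^ p)) (K * t ^ (p - 1)) t := by
    intro t ht
    refine (((Real.hasDerivAt_rpow_const (Or.inl (ha.trans_le ht.1).ne')).sub_const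
      (a ^ p)).const_mul (K / p)).congr_deriv ?_
    field_simp
  exact image_norm_le_of_norm_deriv_right_le_deriv_boundary' (f := fun t => f t - f a)
    (fun t ht => ((hf t ht).sub_const (f a)).continuousAt.continuousWithinAt)
    (fun t ht => ((hf t (Ico_subset_Icc_self ht)).sub_const (f a)).hasDerivWithinAt)
    (by simp) (fun t ht => (hg t ht).continuousAt.continuousWithinAt)
    (fun t ht => (hg t (Ico_subset_Icc_self ht)).hasDerivWithinAt) bound (right_mem_Icc.2 hab)

theorem cauchy_map_of_dist_le {α β γ : Type*} [PseudoMetricSpace β] [PseudoMetricSpace γ]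
    {l : Filter α} {f : α → β} {g : α → γ} (hg : Cauchy (map g l))
    (h : ∀ᶠ x in l ×ˢ l, dist (f x.1) (f x.2) ≤ dist (g x.1) (g x.2)) : Cauchy (map f l) := by
  obtain ⟨hl, hg⟩ := cauchy_map_iff.1 hg
  rw [tendsto_uniformity_iff_dist_tendsto_zero] at hg
  exact cauchy_map_iff.2 ⟨hl, tendsto_uniformity_iff_dist_tendsto_zero.2 <|
    squeeze_zero' (Eventually.of_forall fun _ => dist_nonneg) h hg⟩

theorem exists_tendsto_nhdsGT_of_norm_deriv_le_rpow [CompleteSpace E] {f f' : ℝ → E}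
    {ε₀ K p : ℝ} (hε₀ : 0 < ε₀) (hp : 0 < p) (hf : ∀ t ∈ Ioc 0 ε₀, HasDerivAt f (f' t) t)
    (bound : ∀ t ∈ Ioc 0 ε₀, ‖f' t‖ ≤ K * t ^ (p - 1)) :
    ∃ L, Tendsto f (𝓝[>] 0) (𝓝 L) := by
  set g : ℝ → ℝ := fun t => K / p * t ^ p
  have hg : Tendsto g (𝓝[>] 0) (𝓝 (g 0)) :=
    ((Real.continuousAt_rpow_const 0 p (Or.inr hp.le)).const_mul (K / p)).tendsto.mono_left
      nhdsWithin_le_nhds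
  have hfg : ∀ a ∈ Ioc 0 ε₀, ∀ b ∈ Ioc 0 ε₀, a ≤ b → dist (f a) (f b) ≤ dist (g a) (g b) := by
    intro a ha b hb hab
    rw [dist_comm, dist_eq_norm, dist_comm, Real.dist_eq]
    calc ‖f b - f a‖ ≤ K / p * (b ^ p - a ^ p) :=
          norm_sub_le_of_norm_deriv_le_rpow ha.1 hab hp.ne'
            (fun t ht => hf t ⟨ha.1.trans_le ht.1, ht.2.trans hb.2⟩)
            (fun t ht => bound t ⟨ha.1.trans_le ht.1, ht.2.le.trans hb.2⟩)
      _ ≤ |g b - g a| := by rw [← mul_sub]; exact le_abs_self _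
  have hI : Ioc 0 ε₀ ×ˢ Ioc 0 ε₀ ∈ 𝓝[>] (0 : ℝ) ×ˢ 𝓝[>] 0 :=
    prod_mem_prod (Ioc_mem_nhdsGT hε₀) (Ioc_mem_nhdsGT hε₀)
  refine cauchy_map_iff_exists_tendsto.1 (cauchy_map_of_dist_le hg.cauchy_map ?_)
  filter_upwards [hI] with ⟨a, b⟩ ⟨ha, hb⟩
  rcases le_total a b with hab | hba
  · exact hfg a ha b hb hab
  · rw [dist_comm, dist_comm (g a)]
    exact hfg b hb a ha hba

theorem le_sq_add_sqrt_of_le_add_mul_sqrt {x b c : ℝ} (hb : 0 ≤ b) (hc : 0 ≤ c)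
    (h : x ≤ c + b * √x) : x ≤ (b + √c) ^ 2 := by
  rcases lt_or_ge x 0 with hx | hx
  · nlinarith
  have hy := Real.sq_sqrt hx
  have hc' := Real.sq_sqrt hc
  have : √x ≤ b + √c := by
    by_contra! hlt
    nlinarith [Real.sqrt_nonneg x, Real.sqrt_nonneg c]
  nlinarith [Real.sqrt_nonneg x, Real.sqrt_nonneg c]

theorem add_norm_le_of_norm_deriv_le_mul_sqrt {f f' : ℝ → E} {ε₀ C p : ℝ} (hC : 0 ≤ C)
    (hp : 0 < p) (hf : ∀ t ∈ Ioc 0 ε₀, HasDerivAt f (f' t) t)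
    (bound : ∀ t ∈ Ioc 0 ε₀, ‖f' t‖ ≤ C * t ^ (p - 1) * √(t + ‖f t‖)) :
    ∀ ε ∈ Ioc 0 ε₀, ε + ‖f ε‖ ≤ (C / p * ε₀ ^ p + √(ε₀ + ‖f ε₀‖)) ^ 2 := by
  intro ε hε
  have hε₀ : 0 ≤ ε₀ := hε.1.le.trans hε.2
  have hIcc : ∀ t ∈ Icc ε ε₀, t ∈ Ioc 0 ε₀ := fun t ht => ⟨hε.1.trans_le ht.1, ht.2⟩
  obtain ⟨m, hm, hmax⟩ := isCompact_Icc.exists_isMaxOn (nonempty_Icc.2 hε.2)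
    (f := fun t => t + ‖f t‖) fun t ht =>
      (continuousAt_id.add (hf t (hIcc t ht)).continuousAt.norm).continuousWithinAt
  set x := m + ‖f m‖
  have hsub : ‖f ε₀ - f m‖ ≤ C * √x / p * (ε₀ ^ p - m ^ p) := by
    refine norm_sub_le_of_norm_deriv_le_rpow (hε.1.trans_le hm.1) hm.2 hp.ne'
      (fun t ht => hf t (hIcc t ⟨hm.1.trans ht.1, ht.2⟩)) fun t ht => ?_
    have ht : t ∈ Icc ε ε₀ := ⟨hm.1.trans ht.1, ht.2.le⟩
    calc ‖f' t‖ ≤ C * t ^ (p - 1) * √(t + ‖f t‖) := bound t (hIcc t ht)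
      _ ≤ C * t ^ (p - 1) * √x := by
        have := Real.rpow_nonneg (hε.1.le.trans ht.1) (p - 1)
        gcongr
        exact hmax ht
      _ = C * √x * t ^ (p - 1) := by ring
  have hx : x ≤ (ε₀ + ‖f ε₀‖) + C / p * ε₀ ^ p * √x := by
    have hm0 : 0 ≤ m ^ p := Real.rpow_nonneg (hε.1.le.trans hm.1) p
    have : C * √x / p * (ε₀ ^ p - m ^ p) ≤ C / p * ε₀ ^ p * √x := by
      calc C * √x / p * (ε₀ ^ p - m ^ p) = C / p * √x * (ε₀ ^ p - m ^ p) := by ring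
        _ ≤ C / p * √x * ε₀ ^ p := by gcongr; linarith
        _ = C / p * ε₀ ^ p * √x := by ring
    linarith [norm_sub_norm_le (f m) (f ε₀), norm_sub_rev (f m) (f ε₀), hm.2]
  calc ε + ‖f ε‖ ≤ x := hmax (left_mem_Icc.2 hε.2)
    _ ≤ _ := le_sq_add_sqrt_of_le_add_mul_sqrt (by positivity) (by positivity) hx

end

theorem differential_inequality_limit_general
    {B : Type*} [NormedAddCommGroup B] [NormedSpace ℝ B] [CompleteSpace B]
    (F F' : ℝ → B) (ε₀ C s : ℝ) (hε₀ : 0 < ε₀) (hC : 0 ≤ C)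
    (hs : 1 / 2 < s)
    (hderiv : ∀ ε ∈ Set.Ioc 0 ε₀, HasDerivAt F (F' ε) ε)
    (hineq : ∀ ε ∈ Set.Ioc 0 ε₀,
      ‖F' ε‖ ≤ C * ε ^ (s - 3 / 2) * (ε + ‖F ε‖) ^ ((1:ℝ) / 2)) :
    (∃ M : ℝ, ∀ ε ∈ Set.Ioc 0 ε₀, ‖F ε‖ ≤ M) ∧
    ∃ L : B, Tendsto F (nhdsWithin 0 (Set.Ioi 0)) (nhds L) := by
  have hp : 0 < s - 1 / 2 := by linarith
  set p := s - 1 / 2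
  have bound : ∀ ε ∈ Ioc 0 ε₀, ‖F' ε‖ ≤ C * ε ^ (p - 1) * √(ε + ‖F ε‖) := fun ε hε => by
    rw [Real.sqrt_eq_rpow, show p - 1 = s - 3 / 2 by ring]
    exact hineq ε hε
  set M := (C / p * ε₀ ^ p + √(ε₀ + ‖F ε₀‖)) ^ 2
  have hM := add_norm_le_of_norm_deriv_le_mul_sqrt hC hp hderiv bound
  refine ⟨⟨M, fun ε hε => by linarith [hM ε hε, hε.1]⟩,
    exists_tendsto_nhdsGT_of_norm_deriv_le_rpow (K := C * √M) hε₀ hp hderiv fun ε hε => ?_⟩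
  calc ‖F' ε‖ ≤ C * ε ^ (p - 1) * √(ε + ‖F ε‖) := bound ε hε
    _ ≤ C * ε ^ (p - 1) * √M := by
        have := Real.rpow_nonneg hε.1.le (p - 1)
        gcongr
        exact hM ε hε
    _ = C * √M * ε ^ (p - 1) := by ring

/-- A `C¹` Banach-valued function on `(0, ε₀]` satisfying the differential inequality
`‖F'(ε)‖ ≤ C ε^{s−3/2} (ε + ‖F(ε)‖)^{1/2}` with `1/2 < s < 1` is uniformly bounded
and converges as `ε → 0⁺`. -/
theorem differential_inequality_limit
    {B : Type*} [NormedAddCommGroup B] [NormedSpace ℝ B] [CompleteSpace B]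
    (F F' : ℝ → B) (ε₀ C s : ℝ) (hε₀ : 0 < ε₀) (hC : 0 ≤ C)
    (hs : 1 / 2 < s) (hs' : s < 1)
    (hderiv : ∀ ε ∈ Set.Ioc 0 ε₀, HasDerivAt F (F' ε) ε)
    (hineq : ∀ ε ∈ Set.Ioc 0 ε₀,
      ‖F' ε‖ ≤ C * ε ^ (s - 3 / 2) * (ε + ‖F ε‖) ^ ((1:ℝ) / 2)) :
    (∃ M : ℝ, ∀ ε ∈ Set.Ioc 0 ε₀, ‖F ε‖ ≤ M) ∧
    ∃ L : B, Tendsto F (nhdsWithin 0 (Set.Ioi 0)) (nhds L) :=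
  differential_inequality_limit_general F F' ε₀ C s hε₀ hC hs hderiv hineq
end

section
/- Let F : (0, ε₀] × Ω → B (Ω ⊂ ℂ open) satisfy: F(·, z) extends continuously to ε = 0 with ‖F(ε,z) − F(0,z)‖ ≤ Cε^{2s−1}, and ‖∂F/∂z(ε,z)‖ ≤ C/ε, uniformly for z, z' ∈ Ω. Then z ↦ F(0,z) is Hölder continuous with exponent μ = (2s−1)/(2s): ‖F(0,z) − F(0,z')‖ ≤ C'|z − z'|^{(2s−1)/(2s)}. -/
/-! Approximate `F(0,·)` by the smooth `F(ε,·)`: for every admissible `ε`,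
`‖F(0,z) − F(0,z')‖ ≤ 2Cε^{2s−1} + (C/ε)|z − z'|`. Taking `ε = |z − z'|^{1/(2s)}` balances the two
terms at `|z − z'|^{(2s−1)/(2s)}`; when this `ε` exceeds `ε₀`, use `ε₀` instead, at the price of a
constant depending on the diameter of `Ω`. -/

open Set

/-- With `ε = min ε₀ (d ^ (1 / (α + 1)))`, both `ε ^ α` and `d / ε` are `O(d ^ (α / (α + 1)))`. -/
theorem le_mul_rpow_of_forall_le_rpow_add_div {a d D ε₀ C α : ℝ} (hd : 0 < d) (hdD : d ≤ D)
    (hε₀ : 0 < ε₀) (hC : 0 ≤ C) (hα : 0 < α)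
    (h : ∀ ε ∈ Ioc 0 ε₀, a ≤ 2 * (C * ε ^ α) + C * (d / ε)) :
    a ≤ C * (2 + max 1 (D ^ (1 / (α + 1)) / ε₀)) * d ^ (α / (α + 1)) := by
  set e := d ^ (1 / (α + 1))
  set ε := min ε₀ e
  have he : 0 < e := Real.rpow_pos_of_pos hd _
  have hε : 0 < ε := lt_min hε₀ he
  have hde : d ^ (α / (α + 1)) = e ^ α := by
    rw [← Real.rpow_mul hd.le]; congr 1; field_simp
  have hd_eq : d = e ^ α * e := by
    rw [← hde, ← Real.rpow_add hd]; nth_rewrite 1 [← Real.rpow_one d]; congr 1; field_simp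
  have hεα : ε ^ α ≤ e ^ α := Real.rpow_le_rpow hε.le (min_le_right _ _) hα.le
  have he_div : e / ε ≤ max 1 (D ^ (1 / (α + 1)) / ε₀) := by
    rcases le_total e ε₀ with hle | hle
    · rw [show ε = e from min_eq_right hle, div_self he.ne']
      exact le_max_left _ _
    · rw [show ε = ε₀ from min_eq_left hle]
      exact (div_le_div_of_nonneg_right (Real.rpow_le_rpow hd.le hdD (by positivity))
        hε₀.le).trans (le_max_right _ _)
  have hdε : d / ε ≤ max 1 (D ^ (1 / (α + 1)) / ε₀) * e ^ α := by
    rw [hd_eq, mul_div_assoc, mul_comm]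
    exact mul_le_mul_of_nonneg_right he_div (by positivity)
  calc a ≤ 2 * (C * ε ^ α) + C * (d / ε) := h ε ⟨hε, min_le_left _ _⟩
    _ ≤ 2 * (C * e ^ α) + C * (max 1 (D ^ (1 / (α + 1)) / ε₀) * e ^ α) := by gcongr
    _ = _ := by rw [hde]; ring

theorem hoelder_continuity_boundary_values_general
    {B : Type*} [NormedAddCommGroup B] [NormedSpace ℂ B]
    (Ω : Set ℂ) (hΩconv : Convex ℝ Ω)
    (hΩbdd : Bornology.IsBounded Ω)
    (F : ℝ → ℂ → B) (F' : ℝ → ℂ → B) (ε₀ C s : ℝ)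
    (hε₀ : 0 < ε₀) (hC : 0 ≤ C) (hs : 1 / 2 < s)
    (hconv : ∀ z ∈ Ω, ∀ ε ∈ Set.Ioc 0 ε₀, ‖F ε z - F 0 z‖ ≤ C * ε ^ (2 * s - 1))
    (hderiv : ∀ ε ∈ Set.Ioc 0 ε₀, ∀ z ∈ Ω, HasDerivAt (F ε) (F' ε z) z)
    (hderiv_bound : ∀ ε ∈ Set.Ioc 0 ε₀, ∀ z ∈ Ω, ‖F' ε z‖ ≤ C / ε) :
    ∃ C' : ℝ, ∀ z ∈ Ω, ∀ z' ∈ Ω,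
      ‖F 0 z - F 0 z'‖ ≤ C' * ‖z - z'‖ ^ ((2 * s - 1) / (2 * s)) := by
  obtain ⟨D, hD⟩ := Metric.isBounded_iff.mp hΩbdd
  have hα : 0 < 2 * s - 1 := by linarith
  have hexp : 2 * s - 1 + 1 = 2 * s := by ring
  refine ⟨C * (2 + max 1 (D ^ (1 / (2 * s)) / ε₀)), fun z hz z' hz' => ?_⟩
  rcases eq_or_ne z z' with rfl | hzz'
  · simp [Real.zero_rpow (div_pos hα (by linarith : (0 : ℝ) < 2 * s)).ne']
  have hsplit : ∀ ε ∈ Ioc 0 ε₀,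
      ‖F 0 z - F 0 z'‖ ≤ 2 * (C * ε ^ (2 * s - 1)) + C * (‖z - z'‖ / ε) := fun ε hε => by
    have hmid : ‖F ε z - F ε z'‖ ≤ C / ε * ‖z - z'‖ :=
      hΩconv.norm_image_sub_le_of_norm_hasDerivWithin_le
        (fun x hx => (hderiv ε hε x hx).hasDerivWithinAt) (hderiv_bound ε hε) hz' hz
    calc ‖F 0 z - F 0 z'‖ ≤ ‖F ε z - F 0 z‖ + ‖F ε z - F ε z'‖ + ‖F ε z' - F 0 z'‖ := by
          rw [← norm_neg (F ε z - F 0 z)]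
          exact (norm_add₃_le).trans_eq' (by abel_nf)
      _ ≤ C * ε ^ (2 * s - 1) + C / ε * ‖z - z'‖ + C * ε ^ (2 * s - 1) := by
          gcongr <;> [exact hconv z hz ε hε; exact hconv z' hz' ε hε]
      _ = _ := by ring
  have := le_mul_rpow_of_forall_le_rpow_add_div (norm_pos_iff.mpr (sub_ne_zero.mpr hzz'))
    (dist_eq_norm z z' ▸ hD hz hz') hε₀ hC hα hsplit
  rwa [hexp] at this

/-- If `F(ε,·)` converges to `F(0,·)` at rate `ε^{2s−1}` and the `z`-derivative of
`F(ε,·)` is bounded by `C/ε` on a bounded convex set `Ω`, then `z ↦ F(0,z)` is Hölder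
continuous with exponent `μ = (2s−1)/(2s)` (optimize `ε^{2s} = |z−z'|`). -/
theorem hoelder_continuity_boundary_values
    {B : Type*} [NormedAddCommGroup B] [NormedSpace ℂ B]
    (Ω : Set ℂ) (hΩopen : IsOpen Ω) (hΩconv : Convex ℝ Ω)
    (hΩbdd : Bornology.IsBounded Ω)
    (F : ℝ → ℂ → B) (F' : ℝ → ℂ → B) (ε₀ C s : ℝ)
    (hε₀ : 0 < ε₀) (hC : 0 ≤ C) (hs : 1 / 2 < s) (hs' : s < 1)
    (hconv : ∀ z ∈ Ω, ∀ ε ∈ Set.Ioc 0 ε₀, ‖F ε z - F 0 z‖ ≤ C * ε ^ (2 * s - 1))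
    (hderiv : ∀ ε ∈ Set.Ioc 0 ε₀, ∀ z ∈ Ω, HasDerivAt (F ε) (F' ε z) z)
    (hderiv_bound : ∀ ε ∈ Set.Ioc 0 ε₀, ∀ z ∈ Ω, ‖F' ε z‖ ≤ C / ε) :
    ∃ C' : ℝ, ∀ z ∈ Ω, ∀ z' ∈ Ω,
      ‖F 0 z - F 0 z'‖ ≤ C' * ‖z - z'‖ ^ ((2 * s - 1) / (2 * s)) :=
  hoelder_continuity_boundary_values_general Ω hΩconv hΩbdd F F' ε₀ C s hε₀ hC hs hconv hderiv
    hderiv_bound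
end
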